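/- Let a, b be positive integers. The cardinality statistic A ↦ #A is ab/(a+b)-mesic under the action of rowmotion Φ_A on the set A([a]×[b]) of antichains of [a]×[b]: for every Φ_A-orbit O ⊆ A([a]×[b]), (1/#O)·Σ_{A∈O} #A = ab/(a+b). -/

import Mathlib

/-!
The antichain `A` of `[a] × [b]` is encoded by the Stanley–Thomas word of length `a + b`: its first
`a` letters mark the rows met by `A`, its last `b` letters the columns missed by `A`. Rows and columns
of an antichain are in bijection, so the word has exactly `b` marked letters; the word determines `A`;
and rowmotion rotates the word cyclically by one letter. Hence rowmotion has period `a + b`, and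
summing `#Φ^k(A)` over `k < a + b` counts, at each of the `a` row positions, the marked letters of all
rotations of the word: `a * b` in total. The average over an orbit equals the average over any full
period, which is `a * b / (a + b)`.
-/

open scoped Classical in
/-- Rowmotion on antichains of a finite poset: `A` maps to the set of minimal
elements of the complement of the order ideal generated by `A`. -/
noncomputable def rowmotionA {P : Type*} [PartialOrder P] [Fintype P]
    (A : Finset P) : Finset P :=
  Finset.univ.filter (fun y =>
    ¬ (∃ p ∈ A, y ≤ p) ∧ ∀ z, ¬ (∃ p ∈ A, z ≤ p) → z ≤ y → z = y)

open Finset Function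

namespace Function

variable {α M K : Type*}

theorem Periodic.sum_range_mul [AddCommMonoid M] {g : ℕ → M} {n : ℕ} (hg : Periodic g n)
    (m : ℕ) : ∑ k ∈ range (m * n), g k = m • ∑ k ∈ range n, g k := by
  induction m with
  | zero => simp
  | succ m ih =>
    rw [Nat.succ_mul, sum_range_add, ih, succ_nsmul]
    congr 1
    exact sum_congr rfl fun k _ => by rw [add_comm, ← smul_eq_mul, hg.nsmul]

theorem IsPeriodicPt.sum_range_div_eq [Field K] [CharZero K] {f : α → α} {x : α} {N : ℕ}
    (hN : 0 < N) (hx : IsPeriodicPt f N x) (g : α → K) :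
    (∑ k ∈ range N, g (f^[k] x)) / N =
      (∑ k ∈ range (minimalPeriod f x), g (f^[k] x)) / minimalPeriod f x := by
  obtain ⟨m, hm⟩ := hx.minimalPeriod_dvd
  have hm0 : (m : K) ≠ 0 := Nat.cast_ne_zero.2 fun h => by
    rw [h, mul_zero] at hm
    omega
  have hper : Periodic (fun k => g (f^[k] x)) (minimalPeriod f x) := fun k => by
    simp only [iterate_add_minimalPeriod_eq]
  rw [hm, mul_comm, hper.sum_range_mul, nsmul_eq_mul, Nat.cast_mul, mul_div_mul_left _ _ hm0]

theorem IsPeriodicPt.sum_div_card_eq [Field K] [CharZero K] {f : α → α} {x : α} {N : ℕ}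
    (hN : 0 < N) (hx : IsPeriodicPt f N x) {O : Finset α} (hO : ∀ y, y ∈ O ↔ ∃ k, f^[k] x = y)
    (g : α → K) : (∑ y ∈ O, g y) / #O = (∑ k ∈ range N, g (f^[k] x)) / N := by
  classical
  have hinj : Set.InjOn (f^[·] x) (range (minimalPeriod f x)) := by
    rw [coe_range]
    exact iterate_injOn_Iio_minimalPeriod
  have hOeq : O = (range (minimalPeriod f x)).image (f^[·] x) := by
    ext y
    rw [hO, mem_image]
    constructor
    · rintro ⟨k, rfl⟩
      exact ⟨k % minimalPeriod f x, mem_range.2 (Nat.mod_lt _ (hx.minimalPeriod_pos hN)),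
        iterate_mod_minimalPeriod_eq⟩
    · rintro ⟨k, -, rfl⟩
      exact ⟨k, rfl⟩
  rw [hx.sum_range_div_eq hN, hOeq, sum_image hinj, card_image_of_injOn hinj, card_range]

end Function

section ProdAntichain

variable {α β : Type*} [LinearOrder α] [LinearOrder β] {s : Set (α × β)} {p q : α × β}

theorem IsAntichain.snd_lt_of_fst_lt (hs : IsAntichain (· ≤ ·) s) (hp : p ∈ s) (hq : q ∈ s)
    (h : p.1 < q.1) : q.2 < p.2 := by
  by_contra! h'
  exact hs hp hq (fun e => h.ne (congrArg Prod.fst e)) ⟨h.le, h'⟩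

theorem IsAntichain.eq_of_fst_eq (hs : IsAntichain (· ≤ ·) s) (hp : p ∈ s) (hq : q ∈ s)
    (h : p.1 = q.1) : p = q := by
  by_contra hne
  rcases le_total p.2 q.2 with h2 | h2
  · exact hs hp hq hne ⟨h.le, h2⟩
  · exact hs hq hp (Ne.symm hne) ⟨h.ge, h2⟩

theorem IsAntichain.eq_of_snd_eq (hs : IsAntichain (· ≤ ·) s) (hp : p ∈ s) (hq : q ∈ s)
    (h : p.2 = q.2) : p = q := by
  by_contra hne
  rcases le_total p.1 q.1 with h1 | h1
  · exact hs hp hq hne ⟨h1, h.le⟩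
  · exact hs hq hp (Ne.symm hne) ⟨h1, h.ge⟩

end ProdAntichain

section Rowmotion

variable {P : Type*} [PartialOrder P] [Fintype P]

theorem isAntichain_rowmotionA (A : Finset P) : IsAntichain (· ≤ ·) (rowmotionA A : Set P) := by
  intro p hp q hq hne hle
  simp only [mem_coe, rowmotionA, mem_filter] at hp hq
  exact hne (hq.2.2 p hp.2.1 hle)

theorem isAntichain_iterate_rowmotionA {A : Finset P} (hA : IsAntichain (· ≤ ·) (A : Set P)) :
    ∀ k, IsAntichain (· ≤ ·) ((rowmotionA^[k] A : Finset P) : Set P)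
  | 0 => hA
  | k + 1 => by
    rw [iterate_succ_apply']
    exact isAntichain_rowmotionA _

end Rowmotion

namespace GridAntichain

variable {a b : ℕ} (A : Finset (Fin a × Fin b))

def rows : Finset ℕ := A.image fun p => (p.1 : ℕ)

def cols : Finset ℕ := A.image fun p => (p.2 : ℕ)

theorem lt_of_mem_rows {k : ℕ} (hk : k ∈ rows A) : k < a := by
  obtain ⟨p, -, rfl⟩ := mem_image.1 hk
  exact p.1.2

theorem lt_of_mem_cols {l : ℕ} (hl : l ∈ cols A) : l < b := by
  obtain ⟨p, -, rfl⟩ := mem_image.1 hl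
  exact p.2.2

/-- The order ideal generated by `A` is `{p | p.2 < profile A p.1}`. -/
def profile (k : ℕ) : ℕ := (A.filter fun p => k ≤ (p.1 : ℕ)).sup fun p => (p.2 : ℕ) + 1

theorem profile_antitone : Antitone (profile A) := fun _ _ hkl =>
  sup_mono fun _ hp => by
    rw [mem_filter] at hp ⊢
    exact ⟨hp.1, hkl.trans hp.2⟩

theorem profile_le (k : ℕ) : profile A k ≤ b :=
  Finset.sup_le fun p _ => p.2.2

theorem profile_eq_zero {k : ℕ} (hk : a ≤ k) : profile A k = 0 := by
  rw [profile, filter_false_of_mem fun p _ => by omega, sup_empty]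
  rfl

theorem le_profile {p : Fin a × Fin b} (hp : p ∈ A) {k : ℕ} (hk : k ≤ p.1) :
    (p.2 : ℕ) + 1 ≤ profile A k :=
  le_sup (f := fun p : Fin a × Fin b => (p.2 : ℕ) + 1) (mem_filter.2 ⟨hp, hk⟩)

theorem exists_mem_profile_eq {k : ℕ} (hk : 0 < profile A k) :
    ∃ p ∈ A, k ≤ p.1 ∧ (p.2 : ℕ) + 1 = profile A k := by
  have hne : (A.filter fun p => k ≤ (p.1 : ℕ)).Nonempty :=
    nonempty_iff_ne_empty.2 fun h => by simp only [profile, h, sup_empty] at hk; exact hk.ne rfl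
  obtain ⟨p, hp, hval⟩ := exists_mem_eq_sup _ hne fun p : Fin a × Fin b => (p.2 : ℕ) + 1
  exact ⟨p, (mem_filter.1 hp).1, (mem_filter.1 hp).2, hval.symm⟩

theorem exists_le_mem_iff (p : Fin a × Fin b) :
    (∃ q ∈ A, p ≤ q) ↔ (p.2 : ℕ) < profile A p.1 := by
  constructor
  · rintro ⟨q, hq, hpq⟩
    exact (Nat.lt_succ_of_le hpq.2).trans_le (le_profile A hq hpq.1)
  · intro h
    obtain ⟨q, hq, hpq, hval⟩ := exists_mem_profile_eq A ((Nat.zero_le _).trans_lt h)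
    exact ⟨q, hq, hpq, show (p.2 : ℕ) ≤ q.2 by omega⟩

theorem mem_rowmotionA_iff (p : Fin a × Fin b) :
    p ∈ rowmotionA A ↔
      (p.2 : ℕ) = profile A p.1 ∧ ((p.1 : ℕ) = 0 ∨ profile A p.1 < profile A (p.1 - 1)) := by
  simp only [rowmotionA, mem_filter, mem_univ, true_and, exists_le_mem_iff, not_lt]
  constructor
  · rintro ⟨hp, hmin⟩
    have hcol : (p.2 : ℕ) = profile A p.1 := by
      by_contra hne
      have h := hmin (p.1, ⟨profile A p.1, by omega⟩) le_rfl ⟨le_rfl, hp⟩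
      exact hne (congrArg (fun z : Fin a × Fin b => (z.2 : ℕ)) h).symm
    refine ⟨hcol, ?_⟩
    by_contra! h
    have hz := hmin (⟨p.1 - 1, by omega⟩, p.2) (h.2.trans hp) ⟨Nat.sub_le _ _, le_rfl⟩
    have := congrArg (fun z : Fin a × Fin b => (z.1 : ℕ)) hz
    simp only at this
    omega
  · rintro ⟨hcol, hdrop⟩
    refine ⟨hcol.ge, fun z hz hzp => ?_⟩
    have hz1 : (z.1 : ℕ) ≤ p.1 := hzp.1
    have hz2 : (z.2 : ℕ) ≤ p.2 := hzp.2
    have hpz := profile_antitone A hz1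
    have hrow : (z.1 : ℕ) = p.1 := by
      by_contra hne
      have := profile_antitone A (show (z.1 : ℕ) ≤ p.1 - 1 by omega)
      omega
    exact Prod.ext (Fin.ext hrow) (Fin.ext (by omega))

theorem exists_profile_eq_of_drop {m : ℕ} :
    ∃ k ≤ m, profile A k = profile A m ∧ (k = 0 ∨ profile A k < profile A (k - 1)) := by
  have hex : ∃ k, profile A k = profile A m := ⟨m, rfl⟩
  refine ⟨Nat.find hex, Nat.find_le rfl, Nat.find_spec hex, ?_⟩
  rcases Nat.eq_zero_or_pos (Nat.find hex) with h0 | hpos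
  · exact Or.inl h0
  · have hne := Nat.find_min hex (show Nat.find hex - 1 < Nat.find hex by omega)
    have hle := profile_antitone A (show Nat.find hex - 1 ≤ Nat.find hex by omega)
    rw [Nat.find_spec hex] at hle ⊢
    exact Or.inr (lt_of_le_of_ne hle (Ne.symm hne))

theorem mem_rows_rowmotionA_iff (k : ℕ) :
    k ∈ rows (rowmotionA A) ↔
      k < a ∧ profile A k < b ∧ (k = 0 ∨ profile A k < profile A (k - 1)) := by
  constructor
  · intro hk
    obtain ⟨p, hp, rfl⟩ := mem_image.1 hk
    obtain ⟨hcol, hdrop⟩ := (mem_rowmotionA_iff A p).1 hp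
    exact ⟨p.1.2, hcol ▸ p.2.2, hdrop⟩
  · rintro ⟨hka, hkb, hdrop⟩
    exact mem_image.2 ⟨(⟨k, hka⟩, ⟨profile A k, hkb⟩), (mem_rowmotionA_iff A _).2 ⟨rfl, hdrop⟩, rfl⟩

theorem mem_cols_rowmotionA_iff (l : ℕ) :
    l ∈ cols (rowmotionA A) ↔ l < b ∧ ∃ k < a, profile A k = l := by
  constructor
  · intro hl
    obtain ⟨p, hp, rfl⟩ := mem_image.1 hl
    exact ⟨p.2.2, p.1, p.1.2, ((mem_rowmotionA_iff A p).1 hp).1.symm⟩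
  · rintro ⟨hlb, m, hma, rfl⟩
    obtain ⟨k, hkm, hval, hdrop⟩ := exists_profile_eq_of_drop A (m := m)
    refine mem_image.2 ⟨(⟨k, by omega⟩, ⟨profile A m, hlb⟩), (mem_rowmotionA_iff A _).2
      ⟨hval.symm, hdrop⟩, rfl⟩

section Antichain

variable {A}

theorem card_rows (hA : IsAntichain (· ≤ ·) (A : Set (Fin a × Fin b))) : #(rows A) = #A :=
  card_image_of_injOn fun _ hp _ hq h => hA.eq_of_fst_eq hp hq (Fin.ext h)

theorem card_cols (hA : IsAntichain (· ≤ ·) (A : Set (Fin a × Fin b))) : #(cols A) = #A :=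
  card_image_of_injOn fun _ hp _ hq h => hA.eq_of_snd_eq hp hq (Fin.ext h)

theorem profile_fst_of_mem (hA : IsAntichain (· ≤ ·) (A : Set (Fin a × Fin b)))
    {p : Fin a × Fin b} (hp : p ∈ A) : profile A p.1 = p.2 + 1 := by
  refine le_antisymm (Finset.sup_le fun q hq => ?_) (le_profile A hp le_rfl)
  obtain ⟨hq, hpq⟩ := mem_filter.1 hq
  rcases hpq.lt_or_eq with hlt | heq
  · exact Nat.succ_le_succ (hA.snd_lt_of_fst_lt hp hq hlt).le
  · rw [hA.eq_of_fst_eq hq hp (Fin.ext heq.symm)]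

theorem mem_iff_profile (hA : IsAntichain (· ≤ ·) (A : Set (Fin a × Fin b)))
    (p : Fin a × Fin b) : p ∈ A ↔ (p.1 : ℕ) ∈ rows A ∧ profile A p.1 = p.2 + 1 := by
  refine ⟨fun hp => ⟨mem_image_of_mem _ hp, profile_fst_of_mem hA hp⟩, ?_⟩
  rintro ⟨hrow, hval⟩
  obtain ⟨q, hq, hqp⟩ := mem_image.1 hrow
  have hq' := profile_fst_of_mem hA hq
  rw [hqp, hval] at hq'
  rwa [← Prod.ext (Fin.ext hqp) (Fin.ext (by omega))]

theorem mem_rows_iff (hA : IsAntichain (· ≤ ·) (A : Set (Fin a × Fin b))) (k : ℕ) :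
    k ∈ rows A ↔ profile A (k + 1) < profile A k := by
  constructor
  · intro hk
    obtain ⟨p, hp, rfl⟩ := mem_image.1 hk
    rw [profile_fst_of_mem hA hp, Nat.lt_succ_iff]
    exact Finset.sup_le fun q hq => (hA.snd_lt_of_fst_lt hp (mem_filter.1 hq).1
      (mem_filter.1 hq).2).nat_succ_le
  · intro h
    obtain ⟨p, hp, hkp, hval⟩ := exists_mem_profile_eq A ((Nat.zero_le _).trans_lt h)
    have hpk : ¬ k + 1 ≤ p.1 := fun hle => (le_profile A hp hle).not_gt (hval ▸ h)
    exact mem_image.2 ⟨p, hp, by omega⟩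

theorem mem_cols_iff (hA : IsAntichain (· ≤ ·) (A : Set (Fin a × Fin b))) (l : ℕ) :
    l ∈ cols A ↔ ∃ k, profile A k = l + 1 := by
  constructor
  · intro hl
    obtain ⟨p, hp, rfl⟩ := mem_image.1 hl
    exact ⟨p.1, profile_fst_of_mem hA hp⟩
  · rintro ⟨k, hk⟩
    obtain ⟨p, hp, -, hval⟩ := exists_mem_profile_eq A (k := k) (by omega)
    exact mem_image.2 ⟨p, hp, by omega⟩

/-- At an occupied row the profile jumps to the next column occupied by `A`: the columns of `A`
are exactly the values of the profile, shifted by one, and the profile is antitone. -/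
theorem isLeast_profile (hA : IsAntichain (· ≤ ·) (A : Set (Fin a × Fin b))) {k : ℕ}
    (hk : k ∈ rows A) : IsLeast {v | profile A (k + 1) < v ∧ v - 1 ∈ cols A} (profile A k) := by
  have hdrop := (mem_rows_iff hA k).1 hk
  refine ⟨⟨hdrop, (mem_cols_iff hA _).2 ⟨k, by omega⟩⟩, fun v ⟨hv, hcol⟩ => ?_⟩
  obtain ⟨k', hk'⟩ := (mem_cols_iff hA _).1 hcol
  rcases le_or_gt k' k with hle | hlt
  · have := profile_antitone A hle
    omega
  · have := profile_antitone A (show k + 1 ≤ k' by omega)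
    omega

theorem profile_eq_of_rows_eq_of_cols_eq {B : Finset (Fin a × Fin b)}
    (hA : IsAntichain (· ≤ ·) (A : Set (Fin a × Fin b)))
    (hB : IsAntichain (· ≤ ·) (B : Set (Fin a × Fin b)))
    (hrows : rows A = rows B) (hcols : cols A = cols B) : profile A = profile B := by
  suffices h : ∀ m k, a ≤ k + m → profile A k = profile B k from
    funext fun k => h a k (Nat.le_add_left a k)
  intro m
  induction m with
  | zero => intro k hk; rw [profile_eq_zero A (by omega), profile_eq_zero B (by omega)]
  | succ m ih =>
    intro k hk
    have hnext := ih (k + 1) (by omega)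
    by_cases hrow : k ∈ rows A
    · have hB := isLeast_profile hB (hrows ▸ hrow)
      rw [← hnext, ← hcols] at hB
      exact (isLeast_profile hA hrow).unique hB
    · have hA' := (mem_rows_iff hA k).not.1 hrow
      have hB' := (mem_rows_iff hB k).not.1 (hrows ▸ hrow)
      have := profile_antitone A (Nat.le_add_right k 1)
      have := profile_antitone B (Nat.le_add_right k 1)
      omega

theorem eq_of_rows_eq_of_cols_eq {B : Finset (Fin a × Fin b)}
    (hA : IsAntichain (· ≤ ·) (A : Set (Fin a × Fin b)))
    (hB : IsAntichain (· ≤ ·) (B : Set (Fin a × Fin b)))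
    (hrows : rows A = rows B) (hcols : cols A = cols B) : A = B := by
  ext p
  rw [mem_iff_profile hA, mem_iff_profile hB, hrows,
    profile_eq_of_rows_eq_of_cols_eq hA hB hrows hcols]

end Antichain

section Transitions

variable {A}

theorem succ_mem_rows_rowmotionA_iff (hA : IsAntichain (· ≤ ·) (A : Set (Fin a × Fin b)))
    {k : ℕ} (hk : k + 1 < a) : k + 1 ∈ rows (rowmotionA A) ↔ k ∈ rows A := by
  rw [mem_rows_rowmotionA_iff, mem_rows_iff hA, Nat.add_sub_cancel]
  have := profile_le A k
  omega

theorem zero_mem_cols_rowmotionA_iff (hA : IsAntichain (· ≤ ·) (A : Set (Fin a × Fin b)))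
    (ha : 0 < a) (hb : 0 < b) : 0 ∈ cols (rowmotionA A) ↔ a - 1 ∉ rows A := by
  rw [mem_cols_rowmotionA_iff, mem_rows_iff hA, Nat.sub_add_cancel ha,
    profile_eq_zero A le_rfl]
  constructor
  · rintro ⟨-, k, hk, hval⟩
    have := profile_antitone A (show k ≤ a - 1 by omega)
    omega
  · intro h
    exact ⟨hb, a - 1, by omega, by omega⟩

theorem succ_mem_cols_rowmotionA_iff (hA : IsAntichain (· ≤ ·) (A : Set (Fin a × Fin b)))
    {l : ℕ} (hl : l + 1 < b) : l + 1 ∈ cols (rowmotionA A) ↔ l ∈ cols A := by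
  rw [mem_cols_rowmotionA_iff, mem_cols_iff hA]
  constructor
  · rintro ⟨-, k, -, hk⟩
    exact ⟨k, hk⟩
  · rintro ⟨k, hk⟩
    refine ⟨hl, k, lt_of_not_ge fun hak => ?_, hk⟩
    rw [profile_eq_zero A hak] at hk
    omega

theorem zero_mem_rows_rowmotionA_iff (hA : IsAntichain (· ≤ ·) (A : Set (Fin a × Fin b)))
    (ha : 0 < a) (hb : 0 < b) : 0 ∈ rows (rowmotionA A) ↔ b - 1 ∉ cols A := by
  rw [mem_rows_rowmotionA_iff, mem_cols_iff hA, Nat.sub_add_cancel hb]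
  have := profile_le A 0
  constructor
  · rintro ⟨-, h0, -⟩ ⟨k, hk⟩
    have := profile_antitone A k.zero_le
    omega
  · intro h
    exact ⟨ha, lt_of_le_of_ne this fun h0 => h ⟨0, h0⟩, Or.inl rfl⟩

end Transitions

/-- The Stanley–Thomas word of `A`, read cyclically: letters `0, …, a - 1` record the occupied rows,
letters `a, …, a + b - 1` the unoccupied columns. -/
def letter (r : ℕ) : Prop := if r < a then r ∈ rows A else r - a ∉ cols A

def word (i : ℕ) : Prop := letter A (i % (a + b))

instance : DecidablePred (word A) := fun _ => by
  unfold word letter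
  infer_instance

theorem word_periodic : Periodic (word A) (a + b) := fun i => by
  rw [word, word, Nat.add_mod_right]

theorem word_iff_mem_rows {i : ℕ} (hi : i < a) : word A i ↔ i ∈ rows A := by
  rw [word, letter, Nat.mod_eq_of_lt (by omega), if_pos hi]

theorem word_add_iff_notMem_cols {l : ℕ} (hl : l < b) : word A (a + l) ↔ l ∉ cols A := by
  rw [word, letter, Nat.mod_eq_of_lt (by omega), if_neg (by omega), Nat.add_sub_cancel_left]

section Word

variable {A}

theorem letter_rowmotionA_succ (hA : IsAntichain (· ≤ ·) (A : Set (Fin a × Fin b))) {r : ℕ}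
    (hr : r + 1 < a + b) : letter (rowmotionA A) (r + 1) ↔ letter A r := by
  unfold letter
  rcases lt_trichotomy (r + 1) a with hra | hra | hra
  · rw [if_pos hra, if_pos (by omega), succ_mem_rows_rowmotionA_iff hA hra]
  · rw [if_neg (by omega), if_pos (by omega), hra, Nat.sub_self,
      zero_mem_cols_rowmotionA_iff hA (by omega) (by omega), not_not, show a - 1 = r by omega]
  · rw [if_neg (by omega), if_neg (by omega), show r + 1 - a = r - a + 1 by omega,
      succ_mem_cols_rowmotionA_iff hA (by omega)]

theorem letter_rowmotionA_zero (hA : IsAntichain (· ≤ ·) (A : Set (Fin a × Fin b)))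
    (ha : 0 < a) (hb : 0 < b) : letter (rowmotionA A) 0 ↔ letter A (a + b - 1) := by
  rw [letter, letter, if_pos ha, if_neg (by omega), zero_mem_rows_rowmotionA_iff hA ha hb,
    show a + b - 1 - a = b - 1 by omega]

theorem word_rowmotionA_succ (hA : IsAntichain (· ≤ ·) (A : Set (Fin a × Fin b)))
    (ha : 0 < a) (hb : 0 < b) (i : ℕ) : word (rowmotionA A) (i + 1) ↔ word A i := by
  have hr := Nat.mod_lt i (show 0 < a + b by omega)
  rw [word, word, ← Nat.mod_add_mod]
  rcases (show i % (a + b) + 1 ≤ a + b from hr).lt_or_eq with hlt | heq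
  · rw [Nat.mod_eq_of_lt hlt, letter_rowmotionA_succ hA hlt]
  · rw [heq, Nat.mod_self, letter_rowmotionA_zero hA ha hb, show a + b - 1 = i % (a + b) by omega]

theorem word_iterate_rowmotionA (hA : IsAntichain (· ≤ ·) (A : Set (Fin a × Fin b)))
    (ha : 0 < a) (hb : 0 < b) (k i : ℕ) : word (rowmotionA^[k] A) (i + k) ↔ word A i := by
  induction k generalizing i with
  | zero => rfl
  | succ k ih =>
    rw [iterate_succ_apply', ← add_assoc,
      word_rowmotionA_succ (isAntichain_iterate_rowmotionA hA k) ha hb, ih]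

theorem eq_of_word_iff {B : Finset (Fin a × Fin b)}
    (hA : IsAntichain (· ≤ ·) (A : Set (Fin a × Fin b)))
    (hB : IsAntichain (· ≤ ·) (B : Set (Fin a × Fin b)))
    (h : ∀ i, word A i ↔ word B i) : A = B := by
  refine eq_of_rows_eq_of_cols_eq hA hB (ext fun k => ?_) (ext fun l => ?_)
  · by_cases hk : k < a
    · rw [← word_iff_mem_rows A hk, ← word_iff_mem_rows B hk, h]
    · exact iff_of_false (fun h' => hk (lt_of_mem_rows A h')) (fun h' => hk (lt_of_mem_rows B h'))
  · by_cases hl : l < b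
    · rw [← not_iff_not, ← word_add_iff_notMem_cols A hl, ← word_add_iff_notMem_cols B hl, h]
    · exact iff_of_false (fun h' => hl (lt_of_mem_cols A h')) (fun h' => hl (lt_of_mem_cols B h'))

theorem isPeriodicPt_rowmotionA (hA : IsAntichain (· ≤ ·) (A : Set (Fin a × Fin b)))
    (ha : 0 < a) (hb : 0 < b) : IsPeriodicPt rowmotionA (a + b) A :=
  eq_of_word_iff (isAntichain_iterate_rowmotionA hA _) hA fun i => by
    rw [← word_periodic _ i]
    exact word_iterate_rowmotionA hA ha hb (a + b) i

theorem card_eq_card_filter_word (hA : IsAntichain (· ≤ ·) (A : Set (Fin a × Fin b))) :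
    #A = #{i ∈ range a | word A i} := by
  rw [← card_rows hA]
  congr 1
  ext i
  simp only [mem_filter, mem_range]
  exact ⟨fun hi => ⟨lt_of_mem_rows A hi, (word_iff_mem_rows A (lt_of_mem_rows A hi)).2 hi⟩,
    fun ⟨hi, hw⟩ => (word_iff_mem_rows A hi).1 hw⟩

/-- The word has `#A` letters among the rows and `b - #A` among the columns. -/
theorem count_word (hA : IsAntichain (· ≤ ·) (A : Set (Fin a × Fin b))) :
    Nat.count (word A) (a + b) = b := by
  rw [Nat.count_eq_card_filter_range, card_filter, sum_range_add, ← card_filter,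
    ← card_eq_card_filter_word hA]
  have hsub : cols A ⊆ range b := fun l hl => mem_range.2 (lt_of_mem_cols A hl)
  have hcols : {l ∈ range b | word A (a + l)} = range b \ cols A := by
    ext l
    simp only [mem_filter, mem_sdiff, mem_range]
    exact ⟨fun ⟨hl, hw⟩ => ⟨hl, (word_add_iff_notMem_cols A hl).1 hw⟩,
      fun ⟨hl, hc⟩ => ⟨hl, (word_add_iff_notMem_cols A hl).2 hc⟩⟩
  have hle := (card_le_card hsub).trans_eq (card_range b)
  rw [← card_filter, hcols, card_sdiff_of_subset hsub, card_range, ← card_cols hA]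
  omega

end Word

theorem sum_card_iterate_rowmotionA {A : Finset (Fin a × Fin b)}
    (hA : IsAntichain (· ≤ ·) (A : Set (Fin a × Fin b))) (ha : 0 < a) (hb : 0 < b) :
    ∑ k ∈ range (a + b), #(rowmotionA^[k] A) = a * b := by
  set N := a + b
  have hiter : ∀ k < N, ∀ i, word (rowmotionA^[k] A) i ↔ word A (i + 1 + (N - 1 - k)) := by
    intro k hk i
    rw [← word_periodic _ i, show i + N = i + 1 + (N - 1 - k) + k by omega]
    exact word_iterate_rowmotionA hA ha hb k _
  have hwindow : ∀ i, ∑ k ∈ range N, (if word A (i + 1 + k) then 1 else 0) = b := fun i =>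
    calc ∑ k ∈ range N, (if word A (i + 1 + k) then 1 else 0)
        = #{j ∈ Ico (i + 1) (i + 1 + N) | word A j} := by
          rw [card_filter, sum_Ico_eq_sum_range, Nat.add_sub_cancel_left]
      _ = Nat.count (word A) N := Nat.filter_Ico_card_eq_of_periodic _ _ _ (word_periodic A)
      _ = b := count_word hA
  calc ∑ k ∈ range N, #(rowmotionA^[k] A)
      = ∑ k ∈ range N, ∑ i ∈ range a, if word A (i + 1 + (N - 1 - k)) then 1 else 0 :=
        sum_congr rfl fun k hk => by
          rw [card_eq_card_filter_word (isAntichain_iterate_rowmotionA hA k), card_filter]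
          simp only [hiter k (mem_range.1 hk)]
    _ = ∑ i ∈ range a, ∑ k ∈ range N, if word A (i + 1 + (N - 1 - k)) then 1 else 0 := sum_comm
    _ = ∑ i ∈ range a, b := sum_congr rfl fun i _ =>
        (sum_range_reflect (fun k => if word A (i + 1 + k) then 1 else 0) N).trans (hwindow i)
    _ = a * b := by rw [sum_const, card_range, smul_eq_mul]

end GridAntichain

theorem rowmotion_antichain_cardinality_homomesy
    (a b : ℕ) (ha : 1 ≤ a) (hb : 1 ≤ b)
    (O : Finset (Finset (Fin a × Fin b)))
    (hO : ∃ A : Finset (Fin a × Fin b), IsAntichain (· ≤ ·) (↑A : Set (Fin a × Fin b)) ∧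
      ∀ B, B ∈ O ↔ ∃ k : ℕ, rowmotionA^[k] A = B) :
    (∑ B ∈ O, (B.card : ℚ)) / O.card = (a : ℚ) * (b : ℚ) / ((a : ℚ) + (b : ℚ)) := by
  obtain ⟨A, hA, hO⟩ := hO
  rw [IsPeriodicPt.sum_div_card_eq (by omega) (GridAntichain.isPeriodicPt_rowmotionA hA ha hb) hO
    (fun B => (#B : ℚ)), ← Nat.cast_sum, GridAntichain.sum_card_iterate_rowmotionA hA ha hb]
  push_cast
  rfl
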